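/- If G and G' are two fundamental graphs of the same isotropic system L, then there exists a nonzero c ∈ F_q such that the labeled graphs cG and G' are locally equivalent. -/

import Mathlib

open Matrix

section Defs

variable {F : Type} [Field F] {V : Type} [Fintype V] [DecidableEq V]

/-- The bilinear form on `K = F × F`: `⟨(x,y),(x',y')⟩ = x·y' − x'·y`. -/
def formK (a b : F × F) : F := a.1 * b.2 - b.1 * a.2

/-- The bilinear form on `K^V`: `⟨A,A'⟩ = Σ_v ⟨A v, A' v⟩`. -/
def formKV (A B : V → F × F) : F := ∑ v, formK (A v) (B v)

/-- An isotropic system: an `n`-dimensional subspace of `K^V` on which the form vanishes. -/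
def IsIsotropic (L : Submodule F (V → F × F)) : Prop :=
  Module.finrank F L = Fintype.card V ∧ ∀ A ∈ L, ∀ B ∈ L, formKV A B = 0

/-- A labeled graph on `V` over `F`: a symmetric matrix with zero diagonal. -/
def IsLGraph (G : Matrix V V F) : Prop := G.IsSymm ∧ ∀ v, G v v = 0

/-- The `2n × 2n` matrix `D(A,B)` with four diagonal blocks
`[[diag Z, diag T],[diag X, diag Y]]` where `A = (X,Y)`, `B = (Z,T)`. -/
def Dmat (A B : V → F × F) : Matrix (V ⊕ V) (V ⊕ V) F :=
  fromBlocks (diagonal fun v => (B v).1) (diagonal fun v => (B v).2)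
    (diagonal fun v => (A v).1) (diagonal fun v => (A v).2)

/-- The diagonal entries of `det D(A,B) = (diag Z)(diag Y) − (diag X)(diag T)`. -/
def detD (A B : V → F × F) (v : V) : F := (B v).1 * (A v).2 - (A v).1 * (B v).2

/-- The `v`-th row of the `n × 2n` matrix `(I | G) · D(A,B)` viewed as a vector in `K^V`. -/
def presRow (G : Matrix V V F) (A B : V → F × F) (v : V) : V → F × F :=
  fun w => ((fromCols (1 : Matrix V V F) G * Dmat A B) v (Sum.inl w),
            (fromCols (1 : Matrix V V F) G * Dmat A B) v (Sum.inr w))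

/-- `(G, A, B)` is a graphic presentation of the isotropic system `L`:
`G` is a labeled graph, `det D(A,B) = c·I` with `c ≠ 0`, and the rows of
`(I | G)·D(A,B)` form a basis of `L`. -/
def IsGraphicPresentation (L : Submodule F (V → F × F)) (G : Matrix V V F)
    (A B : V → F × F) : Prop :=
  IsLGraph G ∧ (∃ c : F, c ≠ 0 ∧ ∀ v, detD A B v = c) ∧
  LinearIndependent F (presRow G A B) ∧
  Submodule.span F (Set.range (presRow G A B)) = L

/-- `G` is a fundamental graph of `L`. -/
def IsFundamental (L : Submodule F (V → F × F)) (G : Matrix V V F) : Prop :=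
  ∃ A B, IsGraphicPresentation L G A B

/-- The local complementation operation `G *_r v`. -/
def starOp (G : Matrix V V F) (r : F) (v : V) : Matrix V V F :=
  Matrix.of fun u w => if u = v ∨ w = v ∨ u = w then G u w else G u w + r * G v u * G v w

/-- The operation `G ∘_s v`, multiplying the edges at `v` by `s`. -/
def circOp (G : Matrix V V F) (s : F) (v : V) : Matrix V V F :=
  Matrix.of fun u w => if u = v ∨ w = v then s * G u w else G u w

/-- One local operation. -/
def LocalStep (G H : Matrix V V F) : Prop :=
  (∃ v r, H = starOp G r v) ∨ (∃ v s, s ≠ (0 : F) ∧ H = circOp G s v)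

/-- Two labeled graphs are locally equivalent if one is obtained from the other by a
finite sequence of operations `*_r v` and `∘_s v`. -/
def LocallyEquivalent (G H : Matrix V V F) : Prop :=
  Relation.ReflTransGen LocalStep G H

/-- A complete vector: all coordinates nonzero. -/
def CompleteVec (A : V → F × F) : Prop := ∀ v, A v ≠ 0

/-- `E_{v,x}`: the vector equal to `x` at `v` and `0` elsewhere. -/
def Ev (v : V) (x : F × F) : V → F × F := fun w => if w = v then x else 0

/-- `Â`: the span of the vectors `A_v = E_{v, A v}`. -/
def hatSub (A : V → F × F) : Submodule F (V → F × F) :=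
  Submodule.span F (Set.range fun v => Ev v (A v))

/-- An Eulerian vector of `L`: a complete vector with `Â ∩ L = 0`. -/
def IsEulerian (L : Submodule F (V → F × F)) (A : V → F × F) : Prop :=
  CompleteVec A ∧ hatSub A ⊓ L = ⊥

/-- `ε(L)`: the number of Eulerian vectors of `L`. -/
noncomputable def eulerCount (L : Submodule F (V → F × F)) : ℕ :=
  Set.ncard {A | IsEulerian L A}

/-- The number of pairs `(A,B)` such that `(G,A,B)` is a graphic presentation of `L`. -/
noncomputable def lamCount (L : Submodule F (V → F × F)) (G : Matrix V V F) : ℕ :=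
  Set.ncard {p : (V → F × F) × (V → F × F) | IsGraphicPresentation L G p.1 p.2}

/-- The number of graphic presentations (triples `(G,A,B)`) of `L`. -/
noncomputable def presCount (L : Submodule F (V → F × F)) : ℕ :=
  Set.ncard {t : Matrix V V F × (V → F × F) × (V → F × F) |
    IsGraphicPresentation L t.1 t.2.1 t.2.2}

/-- `l(G)`: the number of labeled graphs locally equivalent to `G`. -/
noncomputable def locCount (G : Matrix V V F) : ℕ :=
  Set.ncard {H | LocallyEquivalent G H}

/-- Connectivity of a labeled graph: the simple graph with edges `{v,w}` with
`g_{vw} ≠ 0` is connected. -/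
def GraphConnected (G : Matrix V V F) : Prop :=
  (SimpleGraph.fromRel fun v w => G v w ≠ 0).Connected

end Defs

section Aux

variable {F : Type} [Field F] {V : Type} [Fintype V] [DecidableEq V]

/-- `X`-matrix of a vertexwise transition: `diag a + G · diag c`. -/
def Xm (a c : V → F) (G : Matrix V V F) : Matrix V V F :=
  Matrix.diagonal a + G * Matrix.diagonal c

lemma Xm_apply (a c : V → F) (G : Matrix V V F) (u w : V) :
    Xm a c G u w = (if u = w then a u else 0) + G u w * c w := by
  simp [Xm, Matrix.add_apply, Matrix.diagonal_apply, Matrix.mul_diagonal]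

lemma isLGraph_starOp {G : Matrix V V F} (hG : IsLGraph G) (r : F) (v : V) :
    IsLGraph (starOp G r v) := by
  obtain ⟨hs, hd⟩ := hG
  constructor
  · apply Matrix.IsSymm.ext
    intro i j
    simp only [starOp, Matrix.of_apply]
    have h1 : G j i = G i j := hs.apply i j
    by_cases hc : i = v ∨ j = v ∨ i = j
    · have hc' : j = v ∨ i = v ∨ j = i := by tauto
      simp [hc, hc', h1]
    · have hc' : ¬(j = v ∨ i = v ∨ j = i) := by tauto
      simp only [hc, hc', if_false]
      rw [h1]; ring
  · intro u
    simp [starOp, hd u]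

lemma smul_starOp {e : F} (he : e ≠ 0) (G : Matrix V V F) (r : F) (v : V) :
    e • starOp G r v = starOp (e • G) (r * e⁻¹) v := by
  ext u w
  simp only [starOp, Matrix.smul_apply, Matrix.of_apply, smul_eq_mul]
  by_cases h : u = v ∨ w = v ∨ u = w <;> simp [h] <;> field_simp <;> ring

lemma smul_circOp (e : F) (G : Matrix V V F) (s : F) (v : V) :
    e • circOp G s v = circOp (e • G) s v := by
  ext u w
  simp only [circOp, Matrix.smul_apply, Matrix.of_apply, smul_eq_mul]
  by_cases h : u = v ∨ w = v <;> simp [h] <;> ring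

lemma locallyEquivalent_smul {e : F} (he : e ≠ 0) {G H : Matrix V V F}
    (h : LocallyEquivalent G H) : LocallyEquivalent (e • G) (e • H) := by
  refine Relation.ReflTransGen.lift (fun M => e • M) ?_ _ _ h
  rintro M N (⟨v, r, rfl⟩ | ⟨v, s, hs, rfl⟩)
  · exact Or.inl ⟨v, r * e⁻¹, smul_starOp he M r v⟩
  · exact Or.inr ⟨v, s, hs, smul_circOp e M s v⟩

/-- Composition (cocycle) identity for `Xm`. -/
lemma Xm_mul_left {G G₁ : Matrix V V F} {a₁ b₁ c₁ d₁ : V → F}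
    (h₁ : Xm a₁ c₁ G * G₁ = Xm b₁ d₁ G) (p q : V → F) :
    Xm a₁ c₁ G * Xm p q G₁ =
      Xm (fun v => a₁ v * p v + b₁ v * q v) (fun v => c₁ v * p v + d₁ v * q v) G := by
  have h2 : G * Matrix.diagonal c₁ * G₁ =
      Matrix.diagonal b₁ + G * Matrix.diagonal d₁ - Matrix.diagonal a₁ * G₁ := by
    have h := h₁
    unfold Xm at h
    rw [Matrix.add_mul] at h
    rw [← h]; abel
  have e1 : (Matrix.diagonal (fun v => a₁ v * p v + b₁ v * q v) : Matrix V V F) =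
      Matrix.diagonal a₁ * Matrix.diagonal p + Matrix.diagonal b₁ * Matrix.diagonal q := by
    rw [Matrix.diagonal_mul_diagonal, Matrix.diagonal_mul_diagonal, Matrix.diagonal_add]
  have e2 : (Matrix.diagonal (fun v => c₁ v * p v + d₁ v * q v) : Matrix V V F) =
      Matrix.diagonal c₁ * Matrix.diagonal p + Matrix.diagonal d₁ * Matrix.diagonal q := by
    rw [Matrix.diagonal_mul_diagonal, Matrix.diagonal_mul_diagonal, Matrix.diagonal_add]
  unfold Xm
  rw [e1, e2, Matrix.add_mul, Matrix.mul_add, Matrix.mul_add,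
    ← Matrix.mul_assoc (G * Matrix.diagonal c₁) G₁ (Matrix.diagonal q), h2]
  noncomm_ring

end Aux
section Aux2

variable {F : Type} [Field F] {V : Type} [Fintype V] [DecidableEq V]

/-- The transition identity realized by a star (local complementation) move. -/
lemma star_eq {G : Matrix V V F} (hG : IsLGraph G) (v : V) (r : F) :
    Xm 1 (fun x => if x = v then -r else 0) G * starOp G r v =
      Xm (fun x => if x = v then 0 else -r * (G v x)^2) 1 G := by
  obtain ⟨hs, hd⟩ := hG
  ext u w
  rw [Matrix.mul_apply]
  have hcol : ∀ x, Xm 1 (fun y => if y = v then -r else 0) G u x =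
      (if u = x then 1 else 0) + (if x = v then G u v * (-r) else 0) := by
    intro x
    rw [Xm_apply]
    by_cases hx : x = v <;> simp [hx, Pi.one_apply]
  have : ∀ x ∈ Finset.univ, Xm 1 (fun y => if y = v then -r else 0) G u x * starOp G r v x w
      = (if u = x then starOp G r v x w else 0) +
        (if x = v then G u v * (-r) * starOp G r v x w else 0) := by
    intro x _
    rw [hcol]
    by_cases h2 : x = v
    · by_cases h1 : u = x
      · have h3 : u = v := h1.trans h2
        simp [h1, h2, h3] <;> ring
      · have h3 : ¬u = v := fun h => h1 (h.trans h2.symm)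
        simp [h1, h2, h3] <;> ring
    · by_cases h1 : u = x <;> simp [h1, h2] <;> ring
  rw [Finset.sum_congr rfl this, Finset.sum_add_distrib, Finset.sum_ite_eq Finset.univ u,
    Finset.sum_ite_eq' Finset.univ v]
  simp only [Finset.mem_univ, if_true]
  rw [Xm_apply]
  have hrowv : ∀ w', starOp G r v v w' = G v w' := by
    intro w'; simp [starOp]
  rw [hrowv]
  simp only [starOp, Matrix.of_apply, Pi.one_apply, mul_one]
  by_cases huw : u = w
  · subst huw
    by_cases huv : u = v
    · subst huv; simp [hd]
    · simp [huv, hd u]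
      rw [hs.apply v u]; ring
  · by_cases huv : u = v
    · subst huv; simp [huw, hd, Ne.symm huw]
    · by_cases hwv : w = v
      · subst hwv; simp [huw, huv, hd]
      · simp [huw, huv, hwv]
        rw [hs.apply v u]; ring

lemma star_unit {G : Matrix V V F} (hG : IsLGraph G) (v : V) (r : F) :
    IsUnit (Xm 1 (fun x => if x = v then -r else 0) G) := by
  obtain ⟨hs, hd⟩ := hG
  have key : Xm 1 (fun x => if x = v then -r else 0) G *
      Xm 1 (fun x => if x = v then r else 0) G = 1 := by
    ext u w
    rw [Matrix.mul_apply]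
    have : ∀ x ∈ Finset.univ, Xm 1 (fun y => if y = v then -r else 0) G u x *
        Xm 1 (fun y => if y = v then r else 0) G x w
        = (if u = x then Xm 1 (fun y => if y = v then r else 0) G x w else 0) +
          (if x = v then G u v * (-r) * Xm 1 (fun y => if y = v then r else 0) G x w else 0) := by
      intro x _
      rw [Xm_apply]
      by_cases h2 : x = v
      · by_cases h1 : u = x
        · have h3 : u = v := h1.trans h2
          simp [h1, h2, h3, Pi.one_apply] <;> ring
        · have h3 : ¬u = v := fun h => h1 (h.trans h2.symm)
          simp [h1, h2, h3, Pi.one_apply] <;> ring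
      · by_cases h1 : u = x <;> simp [h1, h2, Pi.one_apply] <;> ring
    rw [Finset.sum_congr rfl this, Finset.sum_add_distrib, Finset.sum_ite_eq Finset.univ u,
      Finset.sum_ite_eq' Finset.univ v]
    simp only [Finset.mem_univ, if_true]
    rw [Xm_apply, Xm_apply]
    simp only [Pi.one_apply]
    by_cases hwv : w = v
    · simp only [hwv, hd, Matrix.one_apply, if_true, mul_zero, add_zero, mul_one]
      ring
    · have hvw : ¬v = w := fun h => hwv h.symm
      simp [hwv, hvw, Matrix.one_apply]
  have := invertibleOfRightInverse _ _ key
  exact isUnit_of_invertible _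

/-- Peeling off a star move from a transition. -/
lemma star_reduce {G G' : Matrix V V F} {a b c d : V → F} (hG : IsLGraph G)
    (hU : IsUnit (Xm a c G)) (hE : Xm a c G * G' = Xm b d G) (v : V) (r : F) :
    IsUnit (Xm (fun x => if x = v then a v else a x + r * (G v x)^2 * c x)
               (fun x => if x = v then r * a v + c v else c x) (starOp G r v)) ∧
    Xm (fun x => if x = v then a v else a x + r * (G v x)^2 * c x)
       (fun x => if x = v then r * a v + c v else c x) (starOp G r v) * G' =
      Xm (fun x => if x = v then b v else b x + r * (G v x)^2 * d x)
         (fun x => if x = v then r * b v + d v else d x) (starOp G r v) := by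
  set c₁ : V → F := fun x => if x = v then -r else 0 with hc₁
  set b₁ : V → F := fun x => if x = v then 0 else -r * (G v x)^2 with hb₁
  set a₂ : V → F := fun x => if x = v then a v else a x + r * (G v x)^2 * c x with ha₂
  set c₂ : V → F := fun x => if x = v then r * a v + c v else c x with hc₂
  set b₂ : V → F := fun x => if x = v then b v else b x + r * (G v x)^2 * d x with hb₂
  set d₂ : V → F := fun x => if x = v then r * b v + d v else d x with hd₂
  have hs1 := star_eq hG v r
  have hs2 := star_unit hG v r
  have hA : Xm 1 c₁ G * Xm a₂ c₂ (starOp G r v) = Xm a c G := by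
    rw [Xm_mul_left hs1 a₂ c₂]
    ext u w
    rw [Xm_apply, Xm_apply]
    by_cases huw : u = w <;> by_cases hw : w = v
    · have huv : u = v := huw.trans hw
      simp only [huw, hw, huv, ha₂, hc₂, hb₁, hc₁, Pi.one_apply, if_true, one_mul]
      try ring
    · have huv : ¬u = v := fun h => hw (huw.symm.trans h)
      simp only [huw, hw, huv, ha₂, hc₂, hb₁, hc₁, Pi.one_apply, if_true, if_false, one_mul]
      try ring
    · have huv : ¬u = v := fun h => huw (h.trans hw.symm)
      simp only [huw, hw, huv, ha₂, hc₂, hb₁, hc₁, Pi.one_apply, if_true, if_false, one_mul]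
      try ring
    · simp only [huw, hw, ha₂, hc₂, hb₁, hc₁, Pi.one_apply, if_true, if_false, one_mul]
      try ring
  have hB : Xm 1 c₁ G * Xm b₂ d₂ (starOp G r v) = Xm b d G := by
    rw [Xm_mul_left hs1 b₂ d₂]
    ext u w
    rw [Xm_apply, Xm_apply]
    by_cases huw : u = w <;> by_cases hw : w = v
    · have huv : u = v := huw.trans hw
      simp only [huw, hw, huv, hb₂, hd₂, hb₁, hc₁, Pi.one_apply, if_true, one_mul]
      try ring
    · have huv : ¬u = v := fun h => hw (huw.symm.trans h)
      simp only [huw, hw, huv, hb₂, hd₂, hb₁, hc₁, Pi.one_apply, if_true, if_false, one_mul]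
      try ring
    · have huv : ¬u = v := fun h => huw (h.trans hw.symm)
      simp only [huw, hw, huv, hb₂, hd₂, hb₁, hc₁, Pi.one_apply, if_true, if_false, one_mul]
      try ring
    · simp only [huw, hw, hb₂, hd₂, hb₁, hc₁, Pi.one_apply, if_true, if_false, one_mul]
      try ring
  constructor
  · have hdet : IsUnit ((Xm 1 c₁ G).det * (Xm a₂ c₂ (starOp G r v)).det) := by
      rw [← Matrix.det_mul, hA]
      exact (Matrix.isUnit_iff_isUnit_det _).mp hU
    exact (Matrix.isUnit_iff_isUnit_det _).mpr (isUnit_of_mul_isUnit_right hdet)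
  · apply hs2.mul_left_cancel
    rw [← Matrix.mul_assoc, hA, hE, ← hB]

lemma star_reduce_det {G : Matrix V V F} (a b c d : V → F) (v : V) (r : F) (x : V) :
    (if x = v then a v else a x + r * (G v x)^2 * c x) *
      (if x = v then r * b v + d v else d x) -
    (if x = v then b v else b x + r * (G v x)^2 * d x) *
      (if x = v then r * a v + c v else c x) = a x * d x - b x * c x := by
  by_cases hx : x = v <;> simp [hx] <;> ring

end Aux2
section Aux3

variable {F : Type} [Field F] {V : Type} [Fintype V] [DecidableEq V]

lemma circ_chain {H : Matrix V V F} (hd : ∀ v, H v v = 0) (s : V → F) (hs : ∀ v, s v ≠ 0) :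
    LocallyEquivalent H (Matrix.of fun u w => s u * s w * H u w) := by
  have key : ∀ S : Finset V, LocallyEquivalent H
      (Matrix.of fun u w => (if u ∈ S then s u else 1) * (if w ∈ S then s w else 1) * H u w) := by
    intro S
    induction S using Finset.induction with
    | empty =>
      have : (Matrix.of fun u w => (if u ∈ (∅ : Finset V) then s u else 1) *
          (if w ∈ (∅ : Finset V) then s w else 1) * H u w) = H := by
        ext u w; simp
      rw [this]
      exact Relation.ReflTransGen.refl
    | @insert v S hv ih =>
      refine ih.tail (Or.inr ⟨v, s v, hs v, ?_⟩)
      ext u w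
      simp only [circOp, Matrix.of_apply]
      by_cases hu : u = v <;> by_cases hw : w = v
      · simp [hu, hw, hd v, hv]
      · simp [hu, hw, hv, Finset.mem_insert]
        by_cases hwS : w ∈ S <;> simp [hwS] <;> ring
      · simp [hu, hw, hv, Finset.mem_insert]
        by_cases huS : u ∈ S <;> simp [huS] <;> ring
      · simp [hu, hw, Finset.mem_insert]
  have huniv : (Matrix.of fun u w => (if u ∈ (Finset.univ : Finset V) then s u else 1) *
      (if w ∈ (Finset.univ : Finset V) then s w else 1) * H u w) =
      (Matrix.of fun u w => s u * s w * H u w) := by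
    ext u w; simp
  exact huniv ▸ key Finset.univ

lemma ML_base {G G' : Matrix V V F} {a b c d : V → F} {lam : F} (hlam : lam ≠ 0)
    (hG : IsLGraph G) (hG' : IsLGraph G') (hdet : ∀ v, a v * d v - b v * c v = lam)
    (hU : IsUnit (Xm a c G)) (hE : Xm a c G * G' = Xm b d G) (hc : ∀ v, c v = 0) :
    LocallyEquivalent (lam • G) G' := by
  have hc0 : c = (fun _ => 0) := funext hc
  have hXd : Xm a c G = Matrix.diagonal a := by
    simp [Xm, hc0, Matrix.diagonal_zero]
  have ha : ∀ v, a v ≠ 0 := by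
    intro v hav
    have hdet2 := (Matrix.isUnit_iff_isUnit_det _).mp hU
    rw [hXd, Matrix.det_diagonal, isUnit_iff_ne_zero] at hdet2
    exact hdet2 (Finset.prod_eq_zero (Finset.mem_univ v) hav)
  have hentry : ∀ u w, a u * G' u w = (if u = w then b u else 0) + G u w * d w := by
    intro u w
    have h := hE
    rw [hXd] at h
    have h2 := congrFun (congrFun h u) w
    rwa [Matrix.diagonal_mul, Xm_apply] at h2
  have hb : ∀ u, b u = 0 := by
    intro u
    have h := hentry u u
    rw [hG'.2 u, hG.2 u, mul_zero, zero_mul, add_zero, if_pos rfl] at h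
    exact h.symm
  have hd2 : ∀ w, a w * d w = lam := by
    intro w
    have := hdet w
    rw [hc w, mul_zero, sub_zero] at this
    exact this
  have hfin := circ_chain (H := lam • G) (fun v => by simp [hG.2 v]) (fun v => (a v)⁻¹)
    (fun v => inv_ne_zero (ha v))
  have : (Matrix.of fun u w => (a u)⁻¹ * (a w)⁻¹ * (lam • G) u w) = G' := by
    ext u w
    simp only [Matrix.of_apply, Matrix.smul_apply, smul_eq_mul]
    by_cases huw : u = w
    · rw [huw, hG.2 w, hG'.2 w]; ring
    · have h := hentry u w
      rw [if_neg huw, zero_add] at h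
      have hdw := hd2 w
      have hinvu := mul_inv_cancel₀ (ha u)
      have hinvw := mul_inv_cancel₀ (ha w)
      refine mul_left_cancel₀ (ha w) (mul_left_cancel₀ (ha u) ?_)
      linear_combination ((a w * (a w)⁻¹) * (lam * G u w)) * hinvu +
        (lam * G u w) * hinvw - (a w) * h - (G u w) * hdw
  rw [← this]
  exact hfin

end Aux3
section Aux4

variable {F : Type} [Field F] {V : Type} [Fintype V] [DecidableEq V]

/-- A single star-move reduction step, packaged for the main induction. -/
lemma step_pack {G G' : Matrix V V F} {a b c d : V → F} {lam : F}
    (hG : IsLGraph G) (hdet : ∀ x, a x * d x - b x * c x = lam)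
    (hU : IsUnit (Xm a c G)) (hE : Xm a c G * G' = Xm b d G) (v : V) (r : F) :
    IsLGraph (starOp G r v) ∧
    (∀ x, (fun x => if x = v then a v else a x + r * (G v x)^2 * c x) x *
        (fun x => if x = v then r * b v + d v else d x) x -
      (fun x => if x = v then b v else b x + r * (G v x)^2 * d x) x *
        (fun x => if x = v then r * a v + c v else c x) x = lam) ∧
    IsUnit (Xm (fun x => if x = v then a v else a x + r * (G v x)^2 * c x)
               (fun x => if x = v then r * a v + c v else c x) (starOp G r v)) ∧
    Xm (fun x => if x = v then a v else a x + r * (G v x)^2 * c x)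
       (fun x => if x = v then r * a v + c v else c x) (starOp G r v) * G' =
      Xm (fun x => if x = v then b v else b x + r * (G v x)^2 * d x)
         (fun x => if x = v then r * b v + d v else d x) (starOp G r v) := by
  obtain ⟨h1, h2⟩ := star_reduce hG hU hE v r
  exact ⟨isLGraph_starOp hG r v,
    fun x => (star_reduce_det a b c d v r x).trans (hdet x), h1, h2⟩

/-- Main induction: a vertexwise fractional-linear transition between labeled graphs
with constant determinant forces local equivalence up to a scalar. -/
lemma ML [DecidableEq F] : ∀ (k : ℕ) (G G' : Matrix V V F) (a b c d : V → F) (lam : F), lam ≠ 0 →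
    IsLGraph G → IsLGraph G' → (∀ v, a v * d v - b v * c v = lam) →
    IsUnit (Xm a c G) → Xm a c G * G' = Xm b d G →
    (Finset.univ.filter (fun v => c v ≠ 0)).card ≤ k →
    ∃ e : F, e ≠ 0 ∧ LocallyEquivalent (e • G) G' := by
  intro k
  induction k with
  | zero =>
    intro G G' a b c d lam hlam hG hG' hdet hU hE hcard
    have hc : ∀ v, c v = 0 := by
      intro v
      by_contra hv
      have hmem : v ∈ Finset.univ.filter (fun v => c v ≠ 0) := by
        simp [Finset.mem_filter, hv]
      have := Finset.card_pos.mpr ⟨v, hmem⟩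
      omega
    exact ⟨lam, hlam, ML_base hlam hG hG' hdet hU hE hc⟩
  | succ k ih =>
    intro G G' a b c d lam hlam hG hG' hdet hU hE hcard
    by_cases hc : ∀ v, c v = 0
    · exact ⟨lam, hlam, ML_base hlam hG hG' hdet hU hE hc⟩
    push_neg at hc
    obtain ⟨v₀, hv₀⟩ := hc
    by_cases hgood : ∃ v, c v ≠ 0 ∧ a v ≠ 0
    · -- one star move at v with r = -(c v)/(a v) removes v from the support of c
      obtain ⟨v, hcv, hav⟩ := hgood
      set r : F := -(c v) / (a v) with hr
      obtain ⟨hG₁, hdet₁, hU₁, hE₁⟩ := step_pack hG hdet hU hE v r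
      have hcv0 : r * a v + c v = 0 := by
        rw [hr]; field_simp; ring
      have hcard₁ : (Finset.univ.filter
          (fun x => (fun x => if x = v then r * a v + c v else c x) x ≠ 0)).card ≤ k := by
        have hsub : Finset.univ.filter
            (fun x => (fun x => if x = v then r * a v + c v else c x) x ≠ 0) ⊆
            (Finset.univ.filter (fun x => c x ≠ 0)).erase v := by
          intro x hx
          simp only [Finset.mem_filter, Finset.mem_univ, true_and] at hx
          by_cases hxv : x = v
          · rw [if_pos hxv, hcv0] at hx; exact absurd rfl hx
          · rw [if_neg hxv] at hx
            exact Finset.mem_erase.mpr ⟨hxv, by simp [Finset.mem_filter, hx]⟩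
        have hvmem : v ∈ Finset.univ.filter (fun x => c x ≠ 0) := by
          simp [Finset.mem_filter, hcv]
        have h1 := Finset.card_le_card hsub
        rw [Finset.card_erase_of_mem hvmem] at h1
        have h2 := Finset.card_pos.mpr ⟨v, hvmem⟩
        omega
      obtain ⟨e, he, hle⟩ := ih (starOp G r v) G' _ _ _ _ lam hlam hG₁ hG' hdet₁ hU₁ hE₁ hcard₁
      refine ⟨e, he, Relation.ReflTransGen.head (Or.inl ⟨v, r * e⁻¹, ?_⟩) hle⟩
      rw [← smul_starOp he]
    · -- all vertices in the support of c have a = 0; fix up via a star move with r = 1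
      push_neg at hgood
      have hav₀ : a v₀ = 0 := hgood v₀ hv₀
      have hex : ∃ w, G v₀ w * c w ≠ 0 := by
        by_contra hall
        push_neg at hall
        have hrow : ∀ j, Xm a c G v₀ j = 0 := by
          intro j
          rw [Xm_apply]
          by_cases h : v₀ = j
          · rw [if_pos h, hav₀, hall j, zero_add]
          · rw [if_neg h, hall j, zero_add]
        have hdet0 := Matrix.det_eq_zero_of_row_eq_zero v₀ hrow
        have hUd := (Matrix.isUnit_iff_isUnit_det _).mp hU
        rw [hdet0] at hUd
        simp at hUd
      obtain ⟨w, hw⟩ := hex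
      have hGvw : G v₀ w ≠ 0 := left_ne_zero_of_mul hw
      have hcw : c w ≠ 0 := right_ne_zero_of_mul hw
      have haw : a w = 0 := hgood w hcw
      have hwv : ¬w = v₀ := by
        intro h
        rw [h] at hGvw
        exact hGvw (hG.2 v₀)
      -- first move: star at v₀ with r = 1
      obtain ⟨hG₁, hdet₁, hU₁, hE₁⟩ := step_pack hG hdet hU hE v₀ (1 : F)
      -- names for the new coefficient functions
      set a₁ : V → F := fun x => if x = v₀ then a v₀ else a x + (1:F) * (G v₀ x)^2 * c x with ha₁
      set b₁ : V → F := fun x => if x = v₀ then b v₀ else b x + (1:F) * (G v₀ x)^2 * d x with hb₁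
      set c₁ : V → F := fun x => if x = v₀ then (1:F) * a v₀ + c v₀ else c x with hc₁
      set d₁ : V → F := fun x => if x = v₀ then (1:F) * b v₀ + d v₀ else d x with hd₁
      set G₁ : Matrix V V F := starOp G (1:F) v₀ with hG₁def
      have haw1 : a₁ w ≠ 0 := by
        simp only [ha₁, hwv, if_false, haw, zero_add, one_mul]
        exact mul_ne_zero (pow_ne_zero 2 hGvw) hcw
      have hcw1 : c₁ w ≠ 0 := by
        simp only [hc₁, hwv, if_false]; exact hcw
      -- second move: star at w with r₂ = -(c₁ w)/(a₁ w)
      set r₂ : F := -(c₁ w) / (a₁ w) with hr₂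
      obtain ⟨hG₂, hdet₂, hU₂, hE₂⟩ := step_pack hG₁ hdet₁ hU₁ hE₁ w r₂
      have hcw0 : r₂ * a₁ w + c₁ w = 0 := by
        rw [hr₂]; field_simp; ring
      have hcard₂ : (Finset.univ.filter
          (fun x => (fun x => if x = w then r₂ * a₁ w + c₁ w else c₁ x) x ≠ 0)).card ≤ k := by
        have hsub : Finset.univ.filter
            (fun x => (fun x => if x = w then r₂ * a₁ w + c₁ w else c₁ x) x ≠ 0) ⊆
            (Finset.univ.filter (fun x => c x ≠ 0)).erase w := by
          intro x hx
          simp only [Finset.mem_filter, Finset.mem_univ, true_and] at hx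
          by_cases hxw : x = w
          · rw [if_pos hxw, hcw0] at hx; exact absurd rfl hx
          · rw [if_neg hxw] at hx
            refine Finset.mem_erase.mpr ⟨hxw, ?_⟩
            simp only [hc₁] at hx
            by_cases hxv : x = v₀
            · simp [Finset.mem_filter, hxv, hv₀]
            · rw [if_neg hxv] at hx
              simp [Finset.mem_filter, hx]
        have hwmem : w ∈ Finset.univ.filter (fun x => c x ≠ 0) := by
          simp [Finset.mem_filter, hcw]
        have h1 := Finset.card_le_card hsub
        rw [Finset.card_erase_of_mem hwmem] at h1
        have h2 := Finset.card_pos.mpr ⟨w, hwmem⟩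
        omega
      obtain ⟨e, he, hle⟩ := ih (starOp G₁ r₂ w) G' _ _ _ _ lam hlam hG₂ hG' hdet₂ hU₂ hE₂ hcard₂
      have s1 : LocalStep (e • G) (e • G₁) :=
        Or.inl ⟨v₀, (1:F) * e⁻¹, by rw [← smul_starOp he, hG₁def]⟩
      have s2 : LocalStep (e • G₁) (e • starOp G₁ r₂ w) :=
        Or.inl ⟨w, r₂ * e⁻¹, by rw [← smul_starOp he]⟩
      exact ⟨e, he, Relation.ReflTransGen.head s1 (Relation.ReflTransGen.head s2 hle)⟩

end Aux4
section Aux5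

variable {F : Type} [Field F] {V : Type} [Fintype V] [DecidableEq V]

lemma presRow_apply (G : Matrix V V F) (A B : V → F × F) (v w : V) :
    presRow G A B v w = ((if v = w then (B v).1 else 0) + G v w * (A w).1,
      (if v = w then (B v).2 else 0) + G v w * (A w).2) := by
  unfold presRow Dmat
  rw [fromCols_mul_fromBlocks]
  rw [fromCols_apply_inl, fromCols_apply_inr]
  simp [Matrix.add_apply, Matrix.mul_diagonal, Matrix.diagonal_apply]

end Aux5
section Aux6

variable {F : Type} [Field F] {V : Type} [Fintype V] [DecidableEq V]

lemma sum_expand (p f g : V → F) (u : V) (t : F) :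
    ∑ w, p w * ((if w = u then f w else 0) + g w * t) =
      p u * f u + (∑ w, p w * g w) * t := by
  have hterm : ∀ w, p w * ((if w = u then f w else 0) + g w * t) =
      (if w = u then p w * f w else 0) + (p w * g w) * t := by
    intro w; by_cases h : w = u <;> simp [h] <;> ring
  rw [Finset.sum_congr rfl fun w _ => hterm w, Finset.sum_add_distrib,
    Finset.sum_ite_eq' Finset.univ u, ← Finset.sum_mul]
  simp

lemma coeff_fst {G' : Matrix V V F} {A' B' : V → F × F} {p : V → F} {x : V → F × F}
    (h : ∑ w, p w • presRow G' A' B' w = x) (u : V) :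
    (x u).1 = p u * (B' u).1 + (∑ w, p w * G' w u) * (A' u).1 := by
  have h1 := congrArg (fun f => (f u).1) h
  simp only [Finset.sum_apply, Pi.smul_apply, Prod.smul_fst, smul_eq_mul] at h1
  rw [Prod.fst_sum] at h1
  rw [← h1]
  rw [Finset.sum_congr rfl fun w _ => by rw [presRow_apply]]
  simp only [Prod.smul_fst, smul_eq_mul]
  exact sum_expand p (fun w => (B' w).1) (fun w => G' w u) u ((A' u).1)

lemma coeff_snd {G' : Matrix V V F} {A' B' : V → F × F} {p : V → F} {x : V → F × F}
    (h : ∑ w, p w • presRow G' A' B' w = x) (u : V) :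
    (x u).2 = p u * (B' u).2 + (∑ w, p w * G' w u) * (A' u).2 := by
  have h1 := congrArg (fun f => (f u).2) h
  simp only [Finset.sum_apply, Pi.smul_apply, Prod.smul_snd, smul_eq_mul] at h1
  rw [Prod.snd_sum] at h1
  rw [← h1]
  rw [Finset.sum_congr rfl fun w _ => by rw [presRow_apply]]
  simp only [Prod.smul_snd, smul_eq_mul]
  exact sum_expand p (fun w => (B' w).2) (fun w => G' w u) u ((A' u).2)

end Aux6

variable {F : Type} [Field F] [Fintype F] {V : Type} [Fintype V] [DecidableEq V] [Nonempty V]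

/-- Any two fundamental graphs of the same isotropic system are, up to a
nonzero scalar, locally equivalent. -/
theorem fundamental_locallyEquivalent (hchar : ringChar F ≠ 2)
    (L : Submodule F (V → F × F)) (hL : IsIsotropic L)
    (G G' : Matrix V V F) (hG : IsFundamental L G) (hG' : IsFundamental L G') :
    ∃ c : F, c ≠ 0 ∧ LocallyEquivalent (c • G) G' := by
  classical
  obtain ⟨A, B, hLG, ⟨cB, hcB, hdet⟩, hli, hsp⟩ := hG
  obtain ⟨A', B', hLG', ⟨cB', hcB', hdet'⟩, hli', hsp'⟩ := hG'
  have hmem : ∀ v, presRow G A B v ∈ Submodule.span F (Set.range (presRow G' A' B')) := by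
    intro v; rw [hsp', ← hsp]; exact Submodule.subset_span (Set.mem_range_self v)
  have hmem' : ∀ v, presRow G' A' B' v ∈ Submodule.span F (Set.range (presRow G A B)) := by
    intro v; rw [hsp, ← hsp']; exact Submodule.subset_span (Set.mem_range_self v)
  choose P hP using fun v => (Submodule.mem_span_range_iff_exists_fun F).mp (hmem v)
  choose Q hQ using fun v => (Submodule.mem_span_range_iff_exists_fun F).mp (hmem' v)
  have hPQ : Matrix.of P * Matrix.of Q = 1 := by
    ext v x
    have hcomb : ∑ y, (∑ w, P v w * Q w y) • presRow G A B y = presRow G A B v := by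
      calc ∑ y, (∑ w, P v w * Q w y) • presRow G A B y
          = ∑ y, ∑ w, (P v w * Q w y) • presRow G A B y := by
            exact Finset.sum_congr rfl fun y _ => Finset.sum_smul
        _ = ∑ w, ∑ y, (P v w * Q w y) • presRow G A B y := Finset.sum_comm
        _ = ∑ w, P v w • ∑ y, Q w y • presRow G A B y := by
            refine Finset.sum_congr rfl fun w _ => ?_
            rw [Finset.smul_sum]
            exact Finset.sum_congr rfl fun y _ => (mul_smul _ _ _)
        _ = ∑ w, P v w • presRow G' A' B' w :=
            Finset.sum_congr rfl fun w _ => by rw [hQ w]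
        _ = presRow G A B v := hP v
    have hdelta : ∑ y, (if y = v then (1:F) else 0) • presRow G A B y = presRow G A B v := by
      simp [ite_smul]
    have hzero : ∑ y, ((∑ w, P v w * Q w y) - if y = v then 1 else 0) • presRow G A B y
        = 0 := by
      rw [Finset.sum_congr rfl fun y (_ : y ∈ Finset.univ) => sub_smul _ _ _,
        Finset.sum_sub_distrib, hcomb, hdelta, sub_self]
    have hg := Fintype.linearIndependent_iff.mp hli _ hzero x
    have hg2 : ∑ w, P v w * Q w x = if x = v then 1 else 0 := by
      have := sub_eq_zero.mp hg
      exact this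
    rw [Matrix.mul_apply, Matrix.one_apply]
    simp only [Matrix.of_apply]
    rw [hg2]
    by_cases h : v = x
    · simp [h]
    · rw [if_neg (fun h' => h h'.symm), if_neg h]
  have hUnitP : IsUnit (Matrix.of P) := by
    have := invertibleOfRightInverse _ _ hPQ
    exact isUnit_of_invertible _
  -- default coefficient functions
  set a : V → F := fun u => ((B u).1 * (A' u).2 - (B u).2 * (A' u).1) * cB'⁻¹ with ha
  set c : V → F := fun u => ((A u).1 * (A' u).2 - (A u).2 * (A' u).1) * cB'⁻¹ with hc
  set b : V → F := fun u => ((B u).2 * (B' u).1 - (B u).1 * (B' u).2) * cB'⁻¹ with hb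
  set d : V → F := fun u => ((A u).2 * (B' u).1 - (A u).1 * (B' u).2) * cB'⁻¹ with hd
  have hXP : Xm a c G = Matrix.of P := by
    ext v u
    rw [Xm_apply, Matrix.of_apply]
    have h1old := coeff_fst (hP v) u
    have h2old := coeff_snd (hP v) u
    simp only [presRow_apply] at h1old h2old
    have hd'u : (B' u).1 * (A' u).2 - (A' u).1 * (B' u).2 = cB' := hdet' u
    have key : P v u * cB' = (if v = u then ((B v).1 * (A' u).2 - (B v).2 * (A' u).1) else 0)
        + G v u * ((A u).1 * (A' u).2 - (A u).2 * (A' u).1) := by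
      by_cases hvu : v = u
      · simp only [hvu, if_true] at h1old h2old ⊢
        linear_combination (-(A' u).2) * h1old + (A' u).1 * h2old - P u u * hd'u
      · simp only [hvu, if_false] at h1old h2old ⊢
        linear_combination (-(A' u).2) * h1old + (A' u).1 * h2old - P v u * hd'u
    have hinv : cB' * cB'⁻¹ = 1 := mul_inv_cancel₀ hcB'
    simp only [ha, hc]
    by_cases hvu : v = u
    · simp only [hvu, if_true] at key ⊢
      linear_combination (-(cB'⁻¹)) * key + P u u * hinv
    · simp only [hvu, if_false] at key ⊢
      linear_combination (-(cB'⁻¹)) * key + P v u * hinv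
  have hYP : Matrix.of P * G' = Xm b d G := by
    ext v u
    rw [Matrix.mul_apply, Xm_apply]
    have h1old := coeff_fst (hP v) u
    have h2old := coeff_snd (hP v) u
    simp only [presRow_apply] at h1old h2old
    have hd'u : (B' u).1 * (A' u).2 - (A' u).1 * (B' u).2 = cB' := hdet' u
    have key : (∑ w, P v w * G' w u) * cB' =
        (if v = u then ((B v).2 * (B' u).1 - (B v).1 * (B' u).2) else 0)
        + G v u * ((A u).2 * (B' u).1 - (A u).1 * (B' u).2) := by
      by_cases hvu : v = u
      · simp only [hvu, if_true] at h1old h2old ⊢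
        linear_combination (B' u).2 * h1old - (B' u).1 * h2old
          - (∑ w, P u w * G' w u) * hd'u
      · simp only [hvu, if_false] at h1old h2old ⊢
        linear_combination (B' u).2 * h1old - (B' u).1 * h2old
          - (∑ w, P v w * G' w u) * hd'u
    have hinv : cB' * cB'⁻¹ = 1 := mul_inv_cancel₀ hcB'
    simp only [hb, hd, Matrix.of_apply]
    by_cases hvu : v = u
    · simp only [hvu, if_true] at key ⊢
      linear_combination cB'⁻¹ * key - (∑ w, P u w * G' w u) * hinv
    · simp only [hvu, if_false] at key ⊢
      linear_combination cB'⁻¹ * key - (∑ w, P v w * G' w u) * hinv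
  set lam : F := cB * cB'⁻¹ with hlamdef
  have hlam : lam ≠ 0 := mul_ne_zero hcB (inv_ne_zero hcB')
  have hdetlam : ∀ u, a u * d u - b u * c u = lam := by
    intro u
    have hdu : (B u).1 * (A u).2 - (A u).1 * (B u).2 = cB := hdet u
    have hd'u : (B' u).1 * (A' u).2 - (A' u).1 * (B' u).2 = cB' := hdet' u
    have hinv : cB' * cB'⁻¹ = 1 := mul_inv_cancel₀ hcB'
    simp only [ha, hb, hc, hd, hlamdef]
    have hpoly : ((B u).1 * (A' u).2 - (B u).2 * (A' u).1) *
          ((A u).2 * (B' u).1 - (A u).1 * (B' u).2) -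
        ((B u).2 * (B' u).1 - (B u).1 * (B' u).2) *
          ((A u).1 * (A' u).2 - (A u).2 * (A' u).1) = cB * cB' := by
      linear_combination ((B' u).1 * (A' u).2 - (A' u).1 * (B' u).2) * hdu + cB * hd'u
    calc ((B u).1 * (A' u).2 - (B u).2 * (A' u).1) * cB'⁻¹ *
          (((A u).2 * (B' u).1 - (A u).1 * (B' u).2) * cB'⁻¹) -
        ((B u).2 * (B' u).1 - (B u).1 * (B' u).2) * cB'⁻¹ *
          (((A u).1 * (A' u).2 - (A u).2 * (A' u).1) * cB'⁻¹)
        = (((B u).1 * (A' u).2 - (B u).2 * (A' u).1) *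
          ((A u).2 * (B' u).1 - (A u).1 * (B' u).2) -
        ((B u).2 * (B' u).1 - (B u).1 * (B' u).2) *
          ((A u).1 * (A' u).2 - (A u).2 * (A' u).1)) * (cB'⁻¹ * cB'⁻¹) := by ring
      _ = (cB * cB') * (cB'⁻¹ * cB'⁻¹) := by rw [hpoly]
      _ = cB * cB'⁻¹ * (cB' * cB'⁻¹) := by ring
      _ = cB * cB'⁻¹ := by rw [hinv, mul_one]
  have hU : IsUnit (Xm a c G) := by rw [hXP]; exact hUnitP
  have hE : Xm a c G * G' = Xm b d G := by rw [hXP, hYP]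
  exact ML (Finset.univ.filter (fun v => c v ≠ 0)).card G G' a b c d lam hlam
    hLG hLG' hdetlam hU hE le_rfl
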